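/- In each of the three S*BGP routing models (security first, second, third), for any AS graph with customer/provider and peer relationships, any destination d, any attacker m announcing the bogus path 'm,d', and any set S of secure ASes, the routing process converges to a unique stable routing state. -/

import Mathlib

open scoped Classical

namespace SBGP

/-- Business relationship of a neighbor, from the point of view of a given AS. -/
inductive Rel
  | customer
  | peer
  | provider
deriving DecidableEq

/-- The three positions at which the secure-route preference step can be inserted. -/
inductive SecModel
  | first
  | second
  | third
deriving DecidableEq

/-- An AS-level graph with business relationships on its edges. -/
structure ASGraph (V : Type*) where
  adj : V → V → Bool
  /-- `rel u v` is the relationship of `v` as seen from `u`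
      (`customer` means `v` is `u`'s customer, etc.). -/
  rel : V → V → Rel
  adj_symm : ∀ u v, adj u v = adj v u
  adj_irrefl : ∀ v, adj v v = false
  rel_consistent : ∀ u v, adj u v = true →
    ((rel u v = Rel.customer ↔ rel v u = Rel.provider) ∧
     (rel u v = Rel.peer ↔ rel v u = Rel.peer))

variable {V : Type*}

def lpRank : Rel → ℕ
  | Rel.customer => 0
  | Rel.peer => 1
  | Rel.provider => 2

/-- The relationship of the next hop of a route (`none` for trivial routes). -/
def nextRel (G : ASGraph V) : List V → Option Rel
  | a :: b :: _ => some (G.rel a b)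
  | _ => none

/-- Local-preference value of a route (customer < peer < provider). -/
def lpVal (G : ASGraph V) : List V → ℕ
  | a :: b :: _ => lpRank (G.rel a b)
  | _ => 0

/-- `R` is a (nonempty) path in `G`. -/
def IsPath (G : ASGraph V) : List V → Prop
  | [] => False
  | [_] => True
  | a :: b :: rest => G.adj a b = true ∧ IsPath G (b :: rest)

/-- `R` is a simple route in `G` ending at `d`. -/
def IsRouteTo (G : ASGraph V) (R : List V) (d : V) : Prop :=
  R.Nodup ∧ IsPath G R ∧ R.getLast? = some d

/-- The export rule (Ex) along a route `a :: b :: c :: …`: each internal AS `b`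
announces its route (with next hop `c`) to `a` only if that route is a customer
route of `b`, or `a` is `b`'s customer. -/
def ExportOK (G : ASGraph V) : List V → Prop
  | a :: b :: c :: rest =>
      (G.rel b c = Rel.customer ∨ G.rel b a = Rel.customer) ∧
      ExportOK G (b :: c :: rest)
  | _ => True

/-- A route is secure iff every AS on it has deployed S*BGP and it does not
contain the attacker (the bogus route is insecure even if the attacker is in `S`). -/
def SecureRoute (S : Finset V) (m : Option V) (R : List V) : Prop :=
  (∀ v ∈ R, v ∈ S) ∧ (∀ m', m = some m' → m' ∉ R)

/-- A legitimate route: ends at the destination `d` and avoids the attacker. -/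
def LegitRoute (m : Option V) (d : V) (R : List V) : Prop :=
  R.getLast? = some d ∧ ∀ m', m = some m' → m' ∉ R

/-- Perceivable routes at `s` for destination `d` when the (optional) attacker `m`
announces the bogus path "m,d": either a genuine export-compliant route to `d`
avoiding `m`, or an export-compliant route to `m` extended by `m`'s claimed
(possibly nonexistent) edge to `d`. -/
def Perceivable (G : ASGraph V) (m : Option V) (d : V) (s : V) (R : List V) : Prop :=
  R.head? = some s ∧
  ((IsRouteTo G R d ∧ ExportOK G R ∧ ∀ m', m = some m' → m' ∉ R) ∨
   (∃ m' R', m = some m' ∧ R = R' ++ [d] ∧ IsRouteTo G R' m' ∧ d ∉ R' ∧ ExportOK G R'))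

/-- The rank of a route (smaller is better), encoding lexicographically the
ranking steps of the given security model: LP (customer > peer > provider),
SP (shorter > longer) and SecP (secure > insecure), in the order determined by
the model.  All components are `< Fintype.card V + 2`, so the encoding is
faithful on simple routes. -/
noncomputable def rankNat [Fintype V] (G : ASGraph V) (S : Finset V) (m : Option V)
    (mdl : SecModel) (R : List V) : ℕ :=
  let B := Fintype.card V + 2
  let lp := lpVal G R
  let len := R.length
  let sec : ℕ := if SecureRoute S m R then 0 else 1
  match mdl with
  | SecModel.first => sec * B * B + lp * B + len
  | SecModel.second => lp * B * B + sec * B + len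
  | SecModel.third => lp * B * B + len * B + sec

/-- `n` exports the route `R` (its currently selected route) to neighbor `s`:
always if `R` is a customer route of `n` or `n` originates `R`; otherwise only
if `s` is `n`'s customer. -/
def exportsTo (G : ASGraph V) (n s : V) : List V → Prop
  | _ :: c :: _ => G.rel n c = Rel.customer ∨ G.rel n s = Rel.customer
  | _ => True

/-- Routes available to `s` given the current selections `σ` of all ASes:
routes exported by neighbors (with BGP loop detection), together with the
attacker's bogus announcement "m,d" to each of its neighbors. -/
def Avail (G : ASGraph V) (m : Option V) (d : V) (σ : V → List V) (s : V)
    (R : List V) : Prop :=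
  (∃ n, G.adj s n = true ∧ (∀ m', m = some m' → n ≠ m') ∧ σ n ≠ [] ∧
      (σ n).head? = some n ∧ s ∉ σ n ∧ exportsTo G n s (σ n) ∧ R = s :: σ n) ∨
  (∃ m', m = some m' ∧ G.adj s m' = true ∧ s ≠ d ∧ R = [s, m', d])

/-- A stable routing state for destination `d`, secure deployment `S`,
attacker `m`, security model `mdl` and tiebreak `tb`: every AS (other than the
destination and the attacker) selects the best available route, where ties in
rank are broken by the strict tiebreak `tb`. -/
def Stable [Fintype V] (G : ASGraph V) (tb : V → List V → ℕ) (S : Finset V)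
    (m : Option V) (d : V) (mdl : SecModel) (σ : V → List V) : Prop :=
  σ d = [d] ∧
  (∀ m', m = some m' → σ m' = []) ∧
  ∀ s, s ≠ d → (∀ m', m = some m' → s ≠ m') →
    ((σ s = [] ∧ ∀ R, ¬ Avail G m d σ s R) ∨
     (Avail G m d σ s (σ s) ∧
      ∀ R, Avail G m d σ s R → R ≠ σ s →
        rankNat G S m mdl (σ s) < rankNat G S m mdl R ∨
        (rankNat G S m mdl (σ s) = rankNat G S m mdl R ∧ tb s (σ s) < tb s R)))

/-- `s` is happy: it selects a legitimate route to `d`, avoiding the attacker. -/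
def Happy (m : Option V) (d : V) (σ : V → List V) (s : V) : Prop :=
  σ s ≠ [] ∧ (σ s).getLast? = some d ∧ ∀ m', m = some m' → m' ∉ σ s

/-- The set of most-preferred perceivable routes of `s` (before the tiebreak step). -/
def BPR [Fintype V] (G : ASGraph V) (S : Finset V) (m : Option V) (d : V)
    (mdl : SecModel) (s : V) (R : List V) : Prop :=
  Perceivable G m d s R ∧
  ∀ R', Perceivable G m d s R' → rankNat G S m mdl R ≤ rankNat G S m mdl R'

/-- The number of happy source ASes (sources other than `m` and `d`). -/
noncomputable def happyCount [Fintype V] [DecidableEq V] (m d : V)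
    (σ : V → List V) : ℕ :=
  (Finset.univ.filter fun s => s ≠ m ∧ s ≠ d ∧ Happy (some m) d σ s).card

/-- The customer-provider hierarchy is acyclic. -/
def Hierarchy (G : ASGraph V) : Prop :=
  ∃ h : V → ℕ, ∀ u v, G.adj u v = true → G.rel u v = Rel.customer → h v < h u

/-- The tiebreak of every AS is deterministic (injective on routes). -/
def InjTB (tb : V → List V → ℕ) : Prop :=
  ∀ s, Function.Injective (tb s)

end SBGP
namespace SBGP

/-!
A route `R` selected at `s` gets the potential `(insecurity, LP class of R, ±height of s)`,
compared lexicographically, where the insecurity counts only in the security-first model and the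
height, taken from the acyclic customer-provider hierarchy, is negated for provider routes. On
simple routes `rankNat` decodes lexicographically, so the potential is monotone in the ranking at
`s`; and it strictly increases whenever a neighbour extends a route it may export: customer routes
climb the hierarchy, peers only pass on customer routes, and provider routes descend it.

Uniqueness: at a node where two stable states differ, take the smaller potential of its two
routes. The next hops of both routes have smaller potential, hence agree, so each route is
available in the other state, and the strict ranking forces them to coincide.

Existence: settle nodes one at a time in order of potential, as in Dijkstra's algorithm. A route
that becomes available later has larger potential, hence ranks worse, so every settled choice
stays a best response.
-/

section Ranking

variable {V : Type*}

lemma lpVal_le_two (G : ASGraph V) (R : List V) : lpVal G R ≤ 2 := by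
  rcases R with _ | ⟨a, _ | ⟨b, t⟩⟩
  · simp [lpVal]
  · simp [lpVal]
  · change lpRank (G.rel a b) ≤ 2
    cases G.rel a b <;> simp [lpRank]

lemma lpVal_lt_card_add_two [Fintype V] (G : ASGraph V) {R : List V}
    (hR : R.length ≤ Fintype.card V) : lpVal G R < Fintype.card V + 2 := by
  rcases R with _ | ⟨a, _ | ⟨b, t⟩⟩
  · simp [lpVal]
  · simp [lpVal]
  · have := lpVal_le_two G (a :: b :: t)
    simp only [List.length_cons] at hR
    omega

lemma toLex_le_of_mul_add_le {B a b a' b' : ℕ} (hb' : b' < B) (h : a * B + b ≤ a' * B + b') :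
    toLex (a, b) ≤ toLex (a', b') := by
  rw [Prod.Lex.toLex_le_toLex]
  rcases lt_trichotomy a a' with ha | rfl | ha
  · exact Or.inl ha
  · exact Or.inr ⟨rfl, by omega⟩
  · nlinarith

lemma le_of_mul_add_le {B a b a' b' : ℕ} (hb' : b' < B) (h : a * B + b ≤ a' * B + b') :
    a ≤ a' := by
  rcases Prod.Lex.toLex_le_toLex.1 (toLex_le_of_mul_add_le hb' h) with ha | ⟨ha, -⟩
  exacts [ha.le, ha.le]

end Ranking

section Potential

variable {V : Type*}

def IsHeight (G : ASGraph V) (h : V → ℕ) : Prop :=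
  ∀ u v, G.adj u v = true → G.rel u v = Rel.customer → h v < h u

noncomputable def secKey (S : Finset V) (m : V) (mdl : SecModel) (R : List V) : ℕ :=
  if mdl = SecModel.first then (if SecureRoute S (some m) R then 0 else 1) else 0

noncomputable def level (G : ASGraph V) (h : V → ℕ) (s : V) (R : List V) : ℕ ×ₗ ℤ :=
  toLex (lpVal G R, if lpVal G R = 2 then -(h s : ℤ) else h s)

noncomputable def potential (G : ASGraph V) (S : Finset V) (m : V) (mdl : SecModel)
    (h : V → ℕ) (s : V) (R : List V) : ℕ ×ₗ ℕ ×ₗ ℤ :=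
  toLex (secKey S m mdl R, level G h s R)

variable {G : ASGraph V} {S : Finset V} {m : V} {mdl : SecModel} {h : V → ℕ}

lemma secKey_lpVal_le_of_rankNat_le [Fintype V] {R R' : List V}
    (hR' : R'.length ≤ Fintype.card V)
    (hle : rankNat G S (some m) mdl R ≤ rankNat G S (some m) mdl R') :
    toLex (secKey S m mdl R, lpVal G R) ≤ toLex (secKey S m mdl R', lpVal G R') := by
  have hlp' := lpVal_lt_card_add_two G hR'
  unfold rankNat at hle
  cases mdl with
  | first =>
    simp only [secKey, if_true] at hle ⊢
    refine toLex_le_of_mul_add_le hlp'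
      (le_of_mul_add_le (B := Fintype.card V + 2) (b := R.length) (b' := R'.length) (by omega) ?_)
    convert hle using 1 <;> ring
  | second =>
    simp only [secKey, reduceCtorEq, if_false, Prod.Lex.toLex_le_toLex, lt_self_iff_false,
      true_and, false_or] at hle ⊢
    refine le_of_mul_add_le (B := (Fintype.card V + 2) * (Fintype.card V + 2))
      (b := (if SecureRoute S (some m) R then 0 else 1) * (Fintype.card V + 2) + R.length)
      (b' := (if SecureRoute S (some m) R' then 0 else 1) * (Fintype.card V + 2) + R'.length)
      ?_ ?_
    · split_ifs <;> nlinarith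
    · convert hle using 1 <;> ring
  | third =>
    simp only [secKey, reduceCtorEq, if_false, Prod.Lex.toLex_le_toLex, lt_self_iff_false,
      true_and, false_or] at hle ⊢
    refine le_of_mul_add_le (B := (Fintype.card V + 2) * (Fintype.card V + 2))
      (b := R.length * (Fintype.card V + 2) + (if SecureRoute S (some m) R then 0 else 1))
      (b' := R'.length * (Fintype.card V + 2) + (if SecureRoute S (some m) R' then 0 else 1))
      ?_ ?_
    · split_ifs <;> nlinarith
    · convert hle using 1 <;> ring

lemma potential_le_of_rankNat_le [Fintype V] {s : V} {R R' : List V}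
    (hR' : R'.length ≤ Fintype.card V)
    (hle : rankNat G S (some m) mdl R ≤ rankNat G S (some m) mdl R') :
    potential G S m mdl h s R ≤ potential G S m mdl h s R' := by
  have hcls := Prod.Lex.toLex_le_toLex.1 (secKey_lpVal_le_of_rankNat_le hR' hle)
  simp only [potential, level, Prod.Lex.toLex_le_toLex] at hcls ⊢
  rcases hcls with hsec | ⟨hsec, hlp⟩
  · exact Or.inl hsec
  · rcases hlp.lt_or_eq with hlp | hlp
    · exact Or.inr ⟨hsec, Or.inl hlp⟩
    · exact Or.inr ⟨hsec, Or.inr ⟨hlp, by rw [hlp]⟩⟩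

lemma secKey_le_cons (s : V) (R : List V) : secKey S m mdl R ≤ secKey S m mdl (s :: R) := by
  have hsec : SecureRoute S (some m) (s :: R) → SecureRoute S (some m) R := fun h =>
    ⟨fun v hv => h.1 v (List.mem_cons_of_mem s hv),
      fun m' hm hmem => h.2 m' hm (List.mem_cons_of_mem s hmem)⟩
  unfold secKey
  split_ifs <;> tauto

lemma lpVal_eq_zero_of_exportsTo {n s : V} {R : List V} (hhead : R.head? = some n)
    (hexp : exportsTo G n s R) (hns : G.rel n s ≠ Rel.customer) : lpVal G R = 0 := by
  rcases R with _ | ⟨a, _ | ⟨c, t⟩⟩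
  · simp at hhead
  · rfl
  · obtain rfl : a = n := Option.some.inj hhead
    have hnc : G.rel a c = Rel.customer := (show _ ∨ _ from hexp).resolve_right hns
    change lpRank (G.rel a c) = 0
    rw [hnc, lpRank]

lemma level_lt_cons (hh : IsHeight G h)
    {s n : V} {R : List V} (hadj : G.adj s n = true) (hhead : R.head? = some n)
    (hexp : exportsTo G n s R) : level G h n R < level G h s (s :: R) := by
  obtain ⟨rest, rfl⟩ : ∃ rest, R = n :: rest := by
    rcases R with _ | ⟨a, rest⟩
    · simp at hhead
    · exact ⟨rest, by rw [Option.some.inj hhead]⟩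
  have hadj' : G.adj n s = true := by rw [G.adj_symm]; exact hadj
  have hrel := G.rel_consistent s n hadj
  have hrel' := G.rel_consistent n s hadj'
  have hlp : lpVal G (s :: n :: rest) = lpRank (G.rel s n) := rfl
  simp only [level, hlp, Prod.Lex.toLex_lt_toLex]
  rcases hsn : G.rel s n with _ | _ | _
  · have hlp0 := lpVal_eq_zero_of_exportsTo hhead hexp (by rw [hrel.1.1 hsn]; simp)
    simp [hlp0, lpRank, hh s n hadj hsn]
  · have hlp0 := lpVal_eq_zero_of_exportsTo hhead hexp (by rw [hrel.2.1 hsn]; simp)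
    simp [hlp0, lpRank]
  · rcases (lpVal_le_two G (n :: rest)).lt_or_eq with hlt | heq
    · exact Or.inl hlt
    · simp [heq, lpRank, hh n s hadj' (hrel'.1.2 hsn)]

lemma potential_lt_cons (hh : IsHeight G h)
    {s n : V} {R : List V} (hadj : G.adj s n = true) (hhead : R.head? = some n)
    (hexp : exportsTo G n s R) :
    potential G S m mdl h n R < potential G S m mdl h s (s :: R) :=
  Prod.Lex.toLex_lt_toLex'.2 ⟨secKey_le_cons s R, fun _ => level_lt_cons hh hadj hhead hexp⟩

noncomputable def potentialTop (G : ASGraph V) (S : Finset V) (m : V) (mdl : SecModel)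
    (h : V → ℕ) (s : V) (R : List V) : WithTop (ℕ ×ₗ ℕ ×ₗ ℤ) :=
  if R = [] then ⊤ else potential G S m mdl h s R

lemma potentialTop_of_ne_nil (hR : R ≠ []) :
    potentialTop G S m mdl h s R = potential G S m mdl h s R :=
  if_neg hR

end Potential

section States

variable {V : Type*} {G : ASGraph V} {S : Finset V} {m d : V} {mdl : SecModel} {h : V → ℕ}
  {σ τ : V → List V} {s t : V} {R R' : List V}

def Consistent (G : ASGraph V) (m d : V) (σ : V → List V) : Prop :=
  σ d = [d] ∧ ∀ s, s ≠ d → σ s ≠ [] → Avail G (some m) d σ s (σ s)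

lemma Avail.ne_nil (hav : Avail G (some m) d σ s R) : R ≠ [] := by
  rcases hav with ⟨n, -, -, -, -, -, -, rfl⟩ | ⟨m', -, -, -, rfl⟩ <;> simp

lemma Avail.nodup_of (hmd : m ≠ d) (hav : Avail G (some m) d σ s R)
    (htail : ∀ n, R = s :: σ n → (σ n).Nodup) : R.Nodup := by
  rcases hav with ⟨n, -, -, -, -, hsn, -, rfl⟩ | ⟨m', hm', hadj, hsd, rfl⟩
  · exact List.nodup_cons.2 ⟨hsn, htail n rfl⟩
  · obtain rfl := Option.some.inj hm'
    have hsm : s ≠ m := by rintro rfl; simp [G.adj_irrefl] at hadj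
    simp [hsm, hsd, hmd]

lemma Consistent.nodup (hmd : m ≠ d) (hσ : Consistent G m d σ) (s : V) : (σ s).Nodup := by
  induction hk : (σ s).length using Nat.strong_induction_on generalizing s with
  | _ k ih =>
    by_cases hsd : s = d
    · simp [hsd, hσ.1]
    by_cases hs : σ s = []
    · simp [hs]
    exact (hσ.2 s hsd hs).nodup_of hmd fun n hn => ih _ (by simp [← hk, hn]) n rfl

lemma Consistent.nodup_of_avail (hmd : m ≠ d) (hσ : Consistent G m d σ)
    (hav : Avail G (some m) d σ s R) : R.Nodup :=
  hav.nodup_of hmd fun n _ => hσ.nodup hmd n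

lemma Avail.of_agree (hh : IsHeight G h)
    (hav : Avail G (some m) d σ s R)
    (hagree : ∀ n, σ n ≠ [] →
      potential G S m mdl h n (σ n) < potential G S m mdl h s R → σ n = τ n) :
    Avail G (some m) d τ s R := by
  rcases hav with ⟨n, hadj, hnm, hne, hhead, hsn, hexp, rfl⟩ | hbogus
  · have hn := hagree n hne (potential_lt_cons hh hadj hhead hexp)
    rw [hn] at hne hhead hsn hexp ⊢
    exact Or.inl ⟨n, hadj, hnm, hne, hhead, hsn, hexp, rfl⟩
  · exact Or.inr hbogus

lemma Avail.update_of_nil (ht : σ t = []) (hav : Avail G (some m) d σ s R) :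
    Avail G (some m) d (Function.update σ t R') s R := by
  rcases hav with ⟨n, hadj, hnm, hne, hhead, hsn, hexp, rfl⟩ | hbogus
  · have hnt : n ≠ t := by rintro rfl; exact hne ht
    refine Or.inl ⟨n, hadj, hnm, ?_⟩
    rw [Function.update_of_ne hnt]
    exact ⟨hne, hhead, hsn, hexp, rfl⟩
  · exact Or.inr hbogus

lemma Avail.of_update (hh : IsHeight G h)
    (hav : Avail G (some m) d (Function.update σ t R') s R) :
    Avail G (some m) d σ s R ∨ potential G S m mdl h t R' < potential G S m mdl h s R := by
  rcases hav with ⟨n, hadj, hnm, hne, hhead, hsn, hexp, rfl⟩ | hbogus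
  · by_cases hnt : n = t
    · subst hnt
      rw [Function.update_self] at hhead hexp ⊢
      exact Or.inr (potential_lt_cons hh hadj hhead hexp)
    · rw [Function.update_of_ne hnt] at hne hhead hsn hexp ⊢
      exact Or.inl (Or.inl ⟨n, hadj, hnm, hne, hhead, hsn, hexp, rfl⟩)
  · exact Or.inl (Or.inr hbogus)

lemma Consistent.update (hσ : Consistent G m d σ) (ht : σ t = []) (htd : t ≠ d)
    (hav : Avail G (some m) d σ t R) : Consistent G m d (Function.update σ t R) := by
  refine ⟨by rw [Function.update_of_ne htd.symm]; exact hσ.1, fun s hsd hs => ?_⟩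
  by_cases hst : s = t
  · subst hst
    rw [Function.update_self]
    exact hav.update_of_nil ht
  · rw [Function.update_of_ne hst] at hs ⊢
    exact (hσ.2 s hsd hs).update_of_nil ht

end States

section Selection

variable {V : Type*} [Fintype V] {G : ASGraph V} {tb : V → List V → ℕ} {S : Finset V}
  {m d : V} {mdl : SecModel} {h : V → ℕ} {σ τ : V → List V} {s : V} {R R' : List V}

noncomputable def key (G : ASGraph V) (tb : V → List V → ℕ) (S : Finset V) (m : V)
    (mdl : SecModel) (s : V) (R : List V) : ℕ ×ₗ ℕ :=
  toLex (rankNat G S (some m) mdl R, tb s R)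

def IsBest (G : ASGraph V) (tb : V → List V → ℕ) (S : Finset V) (m d : V) (mdl : SecModel)
    (σ : V → List V) (s : V) : Prop :=
  Avail G (some m) d σ s (σ s) ∧
    ∀ R, Avail G (some m) d σ s R → key G tb S m mdl s (σ s) ≤ key G tb S m mdl s R

lemma key_injective (hinj : InjTB tb) (s : V) : Function.Injective (key G tb S m mdl s) :=
  fun _ _ heq => hinj s (congrArg (fun x => (ofLex x).2) heq)

lemma potential_le_of_key_le (hR' : R'.Nodup)
    (hle : key G tb S m mdl s R ≤ key G tb S m mdl s R') :
    potential G S m mdl h s R ≤ potential G S m mdl h s R' :=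
  potential_le_of_rankNat_le hR'.length_le_card
    ((Prod.Lex.toLex_le_toLex.1 hle).elim le_of_lt fun heq => heq.1.le)

lemma key_le_of_potential_lt (hR : R.Nodup)
    (hlt : potential G S m mdl h s R < potential G S m mdl h s R') :
    key G tb S m mdl s R ≤ key G tb S m mdl s R' :=
  not_lt.1 fun hkey => (potential_le_of_key_le hR hkey.le).not_gt hlt

lemma stable_iff (hinj : InjTB tb) :
    Stable G tb S (some m) d mdl σ ↔ σ d = [d] ∧ σ m = [] ∧
      ∀ s, s ≠ d → s ≠ m →
        (σ s = [] ∧ ∀ R, ¬ Avail G (some m) d σ s R) ∨ IsBest G tb S m d mdl σ s := by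
  have hlt : ∀ s R, key G tb S m mdl s (σ s) < key G tb S m mdl s R ↔
      rankNat G S (some m) mdl (σ s) < rankNat G S (some m) mdl R ∨
      (rankNat G S (some m) mdl (σ s) = rankNat G S (some m) mdl R ∧ tb s (σ s) < tb s R) :=
    fun _ _ => Prod.Lex.toLex_lt_toLex
  have hbest : ∀ s R, (R ≠ σ s → key G tb S m mdl s (σ s) < key G tb S m mdl s R) ↔
      key G tb S m mdl s (σ s) ≤ key G tb S m mdl s R := by
    refine fun s R => ⟨fun hlt => ?_, fun hle hne => lt_of_le_of_ne hle fun heq => ?_⟩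
    · by_cases hR : R = σ s
      · rw [hR]
      · exact (hlt hR).le
    · exact hne (key_injective hinj s heq).symm
  simp only [Stable, IsBest, Option.some.injEq, forall_eq', ne_eq, ← hlt, hbest]

lemma Stable.consistent (hinj : InjTB tb) (hσ : Stable G tb S (some m) d mdl σ) :
    Consistent G m d σ := by
  obtain ⟨hd, hm, hsel⟩ := (stable_iff hinj).1 hσ
  refine ⟨hd, fun s hsd hs => ?_⟩
  have hsm : s ≠ m := by rintro rfl; exact hs hm
  exact ((hsel s hsd hsm).resolve_left fun h => hs h.1).1

lemma Stable.key_le (hinj : InjTB tb) (hσ : Stable G tb S (some m) d mdl σ) (hsd : s ≠ d)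
    (hsm : s ≠ m) (hav : Avail G (some m) d σ s R) :
    σ s ≠ [] ∧ key G tb S m mdl s (σ s) ≤ key G tb S m mdl s R := by
  rcases ((stable_iff hinj).1 hσ).2.2 s hsd hsm with ⟨-, hnone⟩ | ⟨hself, hbest⟩
  · exact absurd hav (hnone R)
  · exact ⟨hself.ne_nil, hbest R hav⟩

end Selection

section Uniqueness

variable {V : Type*} [Fintype V] {G : ASGraph V} {tb : V → List V → ℕ} {S : Finset V}
  {m d : V} {mdl : SecModel} {h : V → ℕ} {σ τ : V → List V} {s : V} {R : List V}

lemma eq_of_potentialTop_le (hinj : InjTB tb)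
    (hh : IsHeight G h) (hmd : m ≠ d)
    (hσ : Stable G tb S (some m) d mdl σ) (hτ : Stable G tb S (some m) d mdl τ)
    (hsd : s ≠ d) (hsm : s ≠ m)
    (hle : potentialTop G S m mdl h s (σ s) ≤ potentialTop G S m mdl h s (τ s))
    (hagree : ∀ n, min (potentialTop G S m mdl h n (σ n)) (potentialTop G S m mdl h n (τ n)) <
      potentialTop G S m mdl h s (σ s) → σ n = τ n) :
    σ s = τ s := by
  by_cases hσs : σ s = []
  · have hτs : τ s = [] := by
      by_contra hτs
      simp [potentialTop, hσs, hτs] at hle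
    rw [hσs, hτs]
  have hσ' := hσ.consistent hinj
  have hτ' := hτ.consistent hinj
  have havτ : Avail G (some m) d τ s (σ s) := (hσ'.2 s hsd hσs).of_agree hh fun n hn hlt =>
    hagree n <| (min_le_left _ _).trans_lt <| by
      rw [potentialTop_of_ne_nil hn, potentialTop_of_ne_nil hσs]
      exact WithTop.coe_lt_coe.2 hlt
  obtain ⟨hτs, hkeyτ⟩ := hτ.key_le hinj hsd hsm havτ
  have hpot : potential G S m mdl h s (τ s) ≤ potential G S m mdl h s (σ s) :=
    potential_le_of_key_le (hσ'.nodup hmd s) hkeyτ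
  have havσ : Avail G (some m) d σ s (τ s) := (hτ'.2 s hsd hτs).of_agree hh fun n hn hlt =>
    (hagree n <| (min_le_right _ _).trans_lt <| by
      rw [potentialTop_of_ne_nil hn, potentialTop_of_ne_nil hσs]
      exact WithTop.coe_lt_coe.2 (hlt.trans_le hpot)).symm
  obtain ⟨-, hkeyσ⟩ := hσ.key_le hinj hsd hsm havσ
  exact key_injective hinj s (le_antisymm hkeyσ hkeyτ)

theorem stable_unique (hinj : InjTB tb)
    (hh : IsHeight G h) (hmd : m ≠ d)
    (hσ : Stable G tb S (some m) d mdl σ) (hτ : Stable G tb S (some m) d mdl τ) : σ = τ := by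
  by_contra hne
  obtain ⟨s₀, hs₀⟩ := Function.ne_iff.1 hne
  let ν : V → WithTop (ℕ ×ₗ ℕ ×ₗ ℤ) := fun n =>
    min (potentialTop G S m mdl h n (σ n)) (potentialTop G S m mdl h n (τ n))
  obtain ⟨s, hs, hmin⟩ := Finset.exists_min_image (Finset.univ.filter fun n => σ n ≠ τ n) ν
    ⟨s₀, by simpa using hs₀⟩
  have hagree : ∀ n, ν n < ν s → σ n = τ n := fun n hlt =>
    by_contra fun hn => (hmin n (by simpa using hn)).not_gt hlt
  replace hs : σ s ≠ τ s := by simpa using hs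
  have hsd : s ≠ d := by rintro rfl; exact hs (hσ.1.trans hτ.1.symm)
  have hsm : s ≠ m := by rintro rfl; exact hs ((hσ.2.1 s rfl).trans (hτ.2.1 s rfl).symm)
  rcases le_total (potentialTop G S m mdl h s (σ s)) (potentialTop G S m mdl h s (τ s))
    with hle | hle
  · exact hs (eq_of_potentialTop_le hinj hh hmd hσ hτ hsd hsm hle fun n hn =>
      hagree n (by rwa [show ν s = _ from min_eq_left hle]))
  · exact hs (eq_of_potentialTop_le hinj hh hmd hτ hσ hsd hsm hle fun n hn =>
      (hagree n (by rwa [show ν s = _ from min_eq_right hle,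
        show ν n = _ from min_comm _ _])).symm).symm

end Uniqueness

section Existence

variable {V : Type*} [Fintype V] {G : ASGraph V} {tb : V → List V → ℕ} {S : Finset V}
  {m d : V} {mdl : SecModel} {h : V → ℕ} {σ : V → List V} {s t : V} {R R' : List V}

structure GreedyState (G : ASGraph V) (tb : V → List V → ℕ) (S : Finset V) (m d : V)
    (mdl : SecModel) (h : V → ℕ) (σ : V → List V) : Prop where
  consistent : Consistent G m d σ
  attacker_nil : σ m = []
  key_le : ∀ s, s ≠ d → σ s ≠ [] → ∀ R, Avail G (some m) d σ s R →
    key G tb S m mdl s (σ s) ≤ key G tb S m mdl s R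
  potential_le : ∀ s t R, s ≠ d → σ s ≠ [] → t ≠ d → t ≠ m → σ t = [] →
    Avail G (some m) d σ t R → potential G S m mdl h s (σ s) ≤ potential G S m mdl h t R

lemma greedyState_init (hmd : m ≠ d) :
    GreedyState G tb S m d mdl h (fun v => if v = d then [d] else []) where
  consistent := ⟨if_pos rfl, fun _ hsd hs => absurd (if_neg hsd) hs⟩
  attacker_nil := if_neg hmd
  key_le _ hsd hs := absurd (if_neg hsd) hs
  potential_le _ _ _ hsd hs := absurd (if_neg hsd) hs

lemma GreedyState.stable (hinj : InjTB tb) (hσ : GreedyState G tb S m d mdl h σ)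
    (hdone : ∀ t, t ≠ d → t ≠ m → σ t = [] → ∀ R, ¬ Avail G (some m) d σ t R) :
    Stable G tb S (some m) d mdl σ := by
  refine (stable_iff hinj).2 ⟨hσ.consistent.1, hσ.attacker_nil, fun s hsd hsm => ?_⟩
  by_cases hs : σ s = []
  · exact Or.inl ⟨hs, hdone s hsd hsm hs⟩
  · exact Or.inr ⟨hσ.consistent.2 s hsd hs, hσ.key_le s hsd hs⟩

structure GreedyChoice (G : ASGraph V) (tb : V → List V → ℕ) (S : Finset V) (m d : V)
    (mdl : SecModel) (h : V → ℕ) (σ : V → List V) (t : V) (R : List V) : Prop where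
  unrouted : σ t = []
  ne_dest : t ≠ d
  ne_attacker : t ≠ m
  avail : Avail G (some m) d σ t R
  key_le : ∀ R', Avail G (some m) d σ t R' → key G tb S m mdl t R ≤ key G tb S m mdl t R'
  potential_le : ∀ u R', u ≠ d → u ≠ m → σ u = [] → Avail G (some m) d σ u R' →
    potential G S m mdl h t R ≤ potential G S m mdl h u R'

lemma GreedyState.update (hh : IsHeight G h) (hmd : m ≠ d)
    (hσ : GreedyState G tb S m d mdl h σ) (hc : GreedyChoice G tb S m d mdl h σ t R) :
    GreedyState G tb S m d mdl h (Function.update σ t R) := by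
  obtain ⟨ht, htd, htm, hav, hbest, hmin⟩ := hc
  have hconsistent := hσ.consistent.update ht htd hav
  have hsettled : ∀ s, s ≠ d → (Function.update σ t R) s ≠ [] →
      potential G S m mdl h s ((Function.update σ t R) s) ≤ potential G S m mdl h t R := by
    intro s hsd hs
    by_cases hst : s = t
    · subst hst
      rw [Function.update_self]
    · rw [Function.update_of_ne hst] at hs ⊢
      exact hσ.potential_le s t R hsd hs htd htm ht hav
  refine ⟨hconsistent, by rw [Function.update_of_ne htm.symm]; exact hσ.attacker_nil, ?_, ?_⟩
  · intro s hsd hs R' hav'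
    rcases hav'.of_update hh with hold | hlt
    · by_cases hst : s = t
      · subst hst
        rw [Function.update_self]
        exact hbest R' hold
      · rw [Function.update_of_ne hst] at hs ⊢
        exact hσ.key_le s hsd hs R' hold
    · exact key_le_of_potential_lt (hconsistent.nodup hmd s)
        ((hsettled s hsd hs).trans_lt hlt)
  · intro s u R' hsd hs hud hum hu hav'
    have hut : u ≠ t := by rintro rfl; exact hav.ne_nil (by simpa using hu)
    rw [Function.update_of_ne hut] at hu
    refine (hsettled s hsd hs).trans ?_
    rcases hav'.of_update hh with hold | hlt
    · exact hmin u R' hud hum hu hold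
    · exact hlt.le

noncomputable def availRoutes (G : ASGraph V) (m d : V) (σ : V → List V) (s : V) :
    Finset (List V) :=
  ((Finset.univ.image fun n => s :: σ n) ∪ {[s, m, d]}).filter (Avail G (some m) d σ s)

lemma mem_availRoutes : R ∈ availRoutes G m d σ s ↔ Avail G (some m) d σ s R := by
  simp only [availRoutes, Finset.mem_filter, Finset.mem_union, Finset.mem_image,
    Finset.mem_univ, true_and, Finset.mem_singleton, and_iff_right_iff_imp]
  rintro (⟨n, -, -, -, -, -, -, rfl⟩ | ⟨m', hm', -, -, rfl⟩)
  · exact Or.inl ⟨n, rfl⟩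
  · obtain rfl := Option.some.inj hm'
    exact Or.inr rfl

lemma GreedyState.exists_next (hmd : m ≠ d) (hσ : GreedyState G tb S m d mdl h σ)
    (hnext : ∃ t, t ≠ d ∧ t ≠ m ∧ σ t = [] ∧ ∃ R, Avail G (some m) d σ t R) :
    ∃ t R, GreedyChoice G tb S m d mdl h σ t R := by
  obtain ⟨t₀, ht₀d, ht₀m, ht₀, R₀, hR₀⟩ := hnext
  let T := Finset.univ.filter fun t => t ≠ d ∧ t ≠ m ∧ σ t = []
  obtain ⟨⟨t, R₁⟩, hmem, hmin⟩ := (T.sigma (availRoutes G m d σ)).exists_min_image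
    (fun p => potential G S m mdl h p.1 p.2) ⟨⟨t₀, R₀⟩, by simp [T, mem_availRoutes, *]⟩
  simp only [Finset.mem_sigma, T, Finset.mem_filter, Finset.mem_univ, true_and,
    mem_availRoutes] at hmem
  obtain ⟨⟨htd, htm, ht⟩, hR₁⟩ := hmem
  obtain ⟨R, hR, hbest⟩ := (availRoutes G m d σ t).exists_min_image (key G tb S m mdl t)
    ⟨R₁, mem_availRoutes.2 hR₁⟩
  refine ⟨t, R, ht, htd, htm, mem_availRoutes.1 hR,
    fun R' hR' => hbest R' (mem_availRoutes.2 hR'), fun u R' hud hum hu hR' => ?_⟩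
  calc potential G S m mdl h t R
      ≤ potential G S m mdl h t R₁ := potential_le_of_key_le
        (hσ.consistent.nodup_of_avail hmd hR₁) (hbest R₁ (mem_availRoutes.2 hR₁))
    _ ≤ potential G S m mdl h u R' := hmin ⟨u, R'⟩ (by simp [T, mem_availRoutes, *])

lemma card_routed_lt_update (ht : σ t = []) (hR : R ≠ []) :
    (Finset.univ.filter fun v => σ v ≠ []).card <
      (Finset.univ.filter fun v => Function.update σ t R v ≠ []).card := by
  refine Finset.card_lt_card ((Finset.ssubset_iff_of_subset fun v hv => ?_).2 ⟨t, ?_, ?_⟩)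
  · have hvt : v ≠ t := by rintro rfl; simp [ht] at hv
    simpa [Function.update_of_ne hvt] using hv
  · simpa using hR
  · simpa using ht

theorem GreedyState.exists_stable (hinj : InjTB tb)
    (hh : IsHeight G h) (hmd : m ≠ d)
    {σ : V → List V} (hσ : GreedyState G tb S m d mdl h σ) :
    ∃ τ, Stable G tb S (some m) d mdl τ := by
  by_cases hdone : ∀ t, t ≠ d → t ≠ m → σ t = [] → ∀ R, ¬ Avail G (some m) d σ t R
  · exact ⟨σ, hσ.stable hinj hdone⟩
  push Not at hdone
  obtain ⟨t, R, hc⟩ := hσ.exists_next hmd hdone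
  have hlt := card_routed_lt_update hc.unrouted hc.avail.ne_nil
  exact (hσ.update hh hmd hc).exists_stable hinj hh hmd
termination_by Fintype.card V - (Finset.univ.filter fun v => σ v ≠ []).card
decreasing_by
  have := Finset.card_le_univ (Finset.univ.filter fun v => Function.update σ t R v ≠ [])
  omega

end Existence

theorem unique_stable_state_general {V : Type*} [Fintype V]
    (G : ASGraph V) (hG : Hierarchy G)
    (tb : V → List V → ℕ) (hinj : InjTB tb)
    (m d : V) (hmd : m ≠ d) (S : Finset V) (mdl : SecModel) :
    ∃! σ : V → List V, Stable G tb S (some m) d mdl σ := by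
  obtain ⟨h, hh⟩ := hG
  obtain ⟨σ, hσ⟩ := (greedyState_init (G := G) (tb := tb) (S := S) (mdl := mdl) (h := h)
    hmd).exists_stable hinj hh hmd
  exact ⟨σ, hσ, fun τ hτ => stable_unique hinj hh hmd hτ hσ⟩

/-- **Convergence to a unique stable state under partial S*BGP deployment.**
In each of the three S*BGP routing models, for any AS graph with an acyclic
customer-provider hierarchy, any destination `d`, any attacker `m ≠ d`
announcing the bogus path "m,d", any secure deployment `S`, and deterministic
tiebreaks, there is exactly one stable routing state. -/
theorem unique_stable_state {V : Type*} [Fintype V] [DecidableEq V]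
    (G : ASGraph V) (hG : Hierarchy G)
    (tb : V → List V → ℕ) (hinj : InjTB tb)
    (m d : V) (hmd : m ≠ d) (S : Finset V) (mdl : SecModel) :
    ∃! σ : V → List V, Stable G tb S (some m) d mdl σ :=
  unique_stable_state_general G hG tb hinj m d hmd S mdl

end SBGP
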